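/- Let s₁, s₂ ∈ ℝ and let f(x) = x⁶ − s₁x⁴ + s₂x² − 1, and suppose f has six distinct complex roots α₁, …, α₆. Call a vector w ∈ ℝ_{>0}⁶ admissible if w_i = w_j whenever α_j = conj(α_i), and for admissible w define the real quadratic Q_w(x) = Σ_{i=1}^6 w_i (x − α_i)(x − conj(α_i)) and θ(w) = |Δ(Q_w)|³ / (w₁w₂w₃w₄w₅w₆), where Δ(Q_w) is the discriminant of Q_w. If w is a global minimizer of θ over all admissible vectors, then: the coefficient of x in Q_w is zero (so Q_w(x) = A x² + C with A, C > 0), the unique root of Q_w in the complex upper half-plane is purely imaginary, equal to c·i with c = √(C/A) > 0, and moreover either c·i or i/c lies in the standard fundamental domain { z in the upper half-plane : |Re z| ≤ 1/2 and |z| ≥ 1 }. Consequently, the binary sextic f(x,z) = x⁶ − s₁x⁴z² + s₂x²z⁴ − z⁶ or the binary sextic f(−z,x) is reduced. -/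

import Mathlib

/-!
If `α_{σ i} = -α_i` (the roots of the even polynomial `f` come in pairs `±α`), a minimizer `w`
of `θ` is `σ`-invariant. Otherwise take the geometric mean `v_i = √(w_i w_{σ i})`: it is
admissible with `∏ v = ∏ w`, and `4AC - B² = 2 ∑_{i,j} w_i w_j K(α_i, α_j)` with
`K(z, z') = (|z - z'|² + |z - conj z'|²) / 2`, a kernel that is nonnegative, invariant under
`σ` and positive off the diagonal. Termwise AM-GM, strict for some pair `i ≠ j` because
`w ≠ w ∘ σ`, gives `θ(v) < θ(w)`. Invariance of `w` makes `B = -2 ∑ w_i Re α_i` vanish, so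
`Q_w = A x² + C` has the root `c i` with `c = √(C/A)`, and `c ≥ 1` or `1/c ≥ 1`.
-/

open Complex

/-- Coefficient of `x²` in `Q_w(x) = Σ w_i (x - α_i)(x - conj α_i)`. -/
noncomputable def QA (α : Fin 6 → ℂ) (w : Fin 6 → ℝ) : ℝ := ∑ i, w i

/-- Coefficient of `x` in `Q_w(x) = Σ w_i (x - α_i)(x - conj α_i)`. -/
noncomputable def QB (α : Fin 6 → ℂ) (w : Fin 6 → ℝ) : ℝ := -∑ i, w i * (2 * (α i).re)

/-- Constant coefficient of `Q_w(x) = Σ w_i (x - α_i)(x - conj α_i)`. -/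
noncomputable def QC (α : Fin 6 → ℂ) (w : Fin 6 → ℝ) : ℝ :=
  ∑ i, w i * Complex.normSq (α i)

/-- `θ(w) = |Δ(Q_w)|³ / (w₁⋯w₆)` with `Δ(Q_w) = B² - 4AC` the discriminant of `Q_w`. -/
noncomputable def theta (α : Fin 6 → ℂ) (w : Fin 6 → ℝ) : ℝ :=
  |QB α w ^ 2 - 4 * QA α w * QC α w| ^ 3 / ∏ i, w i

/-- A vector `w ∈ ℝ_{>0}⁶` is admissible if `w_i = w_j` whenever `α_j = conj (α_i)`. -/
def Admissible (α : Fin 6 → ℂ) (w : Fin 6 → ℝ) : Prop :=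
  (∀ i, 0 < w i) ∧ ∀ i j, α j = (starRingEnd ℂ) (α i) → w i = w j

open Finset ComplexConjugate

section KernelForm

variable {ι : Type*} [Fintype ι]

def kernelForm (K : ι → ι → ℝ) (u : ι → ℝ) : ℝ := ∑ i, ∑ j, K i j * u i * u j

lemma kernelForm_nonneg {K : ι → ι → ℝ} {u : ι → ℝ} (hK : ∀ i j, 0 ≤ K i j)
    (hu : ∀ i, 0 ≤ u i) : 0 ≤ kernelForm K u :=
  sum_nonneg fun i _ => sum_nonneg fun j _ => mul_nonneg (mul_nonneg (hK i j) (hu i)) (hu j)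

lemma kernelForm_comp_perm {K : ι → ι → ℝ} (σ : Equiv.Perm ι)
    (hK : ∀ i j, K (σ i) (σ j) = K i j) (u : ι → ℝ) : kernelForm K (u ∘ σ) = kernelForm K u := by
  calc kernelForm K (u ∘ σ) = ∑ i, ∑ j, K (σ i) (σ j) * u (σ i) * u (σ j) := by
        simp only [kernelForm, Function.comp_apply, hK]
    _ = kernelForm K u := by
      rw [Equiv.sum_comp σ fun i => ∑ j, K i (σ j) * u i * u (σ j)]
      exact sum_congr rfl fun i _ => Equiv.sum_comp σ fun j => K i j * u i * u j

lemma two_mul_lt_add_of_sq_eq_mul {p q s : ℝ} (hp : 0 ≤ p) (hq : 0 ≤ q) (hs : s ^ 2 = p * q)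
    (hpq : p ≠ q) : 2 * s < p + q := by
  have := sq_pos_of_ne_zero (sub_ne_zero.2 hpq)
  nlinarith [sq_nonneg (2 * s - (p + q))]

lemma exists_ne_and_mul_ne_mul {a b : ι → ℝ} (hι : 3 ≤ Fintype.card ι) (ha : ∀ i, 0 < a i)
    (hb : ∀ i, 0 < b i) (hab : a ≠ b) : ∃ i j, i ≠ j ∧ a i * a j ≠ b i * b j := by
  classical
  by_contra! h
  refine hab (funext fun i => ?_)
  have hcard : 1 < (univ.erase i).card := by
    rw [card_erase_of_mem (mem_univ i), card_univ]; omega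
  obtain ⟨j, hj, hji⟩ := exists_mem_ne hcard i
  obtain ⟨k, hk, hkj⟩ := exists_mem_ne hcard j
  have hki : k ≠ i := ne_of_mem_erase hk
  have hij := h i j hji.symm
  have hik := h i k hki.symm
  have hjk := h j k hkj.symm
  have hsq : a i ^ 2 * (a j * a k) = b i ^ 2 * (a j * a k) := by
    linear_combination (a i * a k) * hij + (b i * b j) * hik - (b i ^ 2) * hjk
  have := mul_right_cancel₀ (mul_pos (ha j) (ha k)).ne' hsq
  exact (pow_left_inj₀ (ha i).le (hb i).le two_ne_zero).1 this

lemma two_mul_kernelForm_lt_add {K : ι → ι → ℝ} {a b v : ι → ℝ} (hι : 3 ≤ Fintype.card ι)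
    (hK : ∀ i j, 0 ≤ K i j) (hK' : ∀ i j, i ≠ j → 0 < K i j) (ha : ∀ i, 0 < a i)
    (hb : ∀ i, 0 < b i) (hv : ∀ i, v i ^ 2 = a i * b i) (hab : a ≠ b) :
    2 * kernelForm K v < kernelForm K a + kernelForm K b := by
  have hterm (i j : ι) : (v i * v j) ^ 2 = (a i * a j) * (b i * b j) := by
    rw [mul_pow, hv, hv]; ring
  have hpos (i j : ι) : 0 ≤ a i * a j := (mul_pos (ha i) (ha j)).le
  have hpos' (i j : ι) : 0 ≤ b i * b j := (mul_pos (hb i) (hb j)).le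
  have hle (i j : ι) : 2 * (K i j * v i * v j) ≤ K i j * a i * a j + K i j * b i * b j := by
    have := two_mul_le_add_of_sq_le_mul (hpos i j) (hpos' i j) (hterm i j).le
    nlinarith [mul_le_mul_of_nonneg_left this (hK i j)]
  obtain ⟨i₀, j₀, hne, hneq⟩ := exists_ne_and_mul_ne_mul hι ha hb hab
  have hlt : 2 * (K i₀ j₀ * v i₀ * v j₀) < K i₀ j₀ * a i₀ * a j₀ + K i₀ j₀ * b i₀ * b j₀ := by
    have := two_mul_lt_add_of_sq_eq_mul (hpos i₀ j₀) (hpos' i₀ j₀) (hterm i₀ j₀) hneq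
    nlinarith [mul_lt_mul_of_pos_left this (hK' i₀ j₀ hne)]
  simp only [kernelForm, mul_sum, ← sum_add_distrib]
  exact sum_lt_sum (fun i _ => sum_le_sum fun j _ => hle i j)
    ⟨i₀, mem_univ _, sum_lt_sum (fun j _ => hle i₀ j) ⟨j₀, mem_univ _, hlt⟩⟩

end KernelForm

section RootSymmetry

variable {ι : Type*}

lemma exists_eq_neg_of_prod_sub_even {R : Type*} [CommRing R] [IsDomain R] [Fintype ι]
    {α : ι → R} (heven : ∀ x, ∏ j, (x - α j) = ∏ j, (-x - α j)) (i : ι) :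
    ∃ j, α j = -α i := by
  have h : ∏ j, (-α i - α j) = 0 := by
    rw [← heven]; exact prod_eq_zero (mem_univ i) (sub_self _)
  obtain ⟨j, -, hj⟩ := prod_eq_zero_iff.1 h
  exact ⟨j, by linear_combination -hj⟩

lemma exists_perm_apply_eq_neg {G : Type*} [InvolutiveNeg G] {α : ι → G}
    (hα : Function.Injective α) (h : ∀ i, ∃ j, α j = -α i) :
    ∃ σ : Equiv.Perm ι, ∀ i, α (σ i) = -α i := by
  choose τ hτ using h
  exact ⟨Function.Involutive.toPerm τ fun i => hα (by rw [hτ, hτ, neg_neg]), hτ⟩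

end RootSymmetry

noncomputable def rootKernel (z z' : ℂ) : ℝ := (normSq (z - z') + normSq (z - conj z')) / 2

lemma rootKernel_nonneg (z z' : ℂ) : 0 ≤ rootKernel z z' :=
  div_nonneg (add_nonneg (normSq_nonneg _) (normSq_nonneg _)) zero_le_two

lemma rootKernel_pos {z z' : ℂ} (h : z ≠ z') : 0 < rootKernel z z' :=
  div_pos (add_pos_of_pos_of_nonneg (normSq_pos.2 (sub_ne_zero.2 h)) (normSq_nonneg _)) two_pos

lemma rootKernel_neg (z z' : ℂ) : rootKernel (-z) (-z') = rootKernel z z' := by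
  rw [rootKernel, rootKernel, map_neg, ← neg_sub', ← neg_sub', normSq_neg, normSq_neg]

lemma four_QA_mul_QC_sub_QB_sq (α : Fin 6 → ℂ) (u : Fin 6 → ℝ) :
    4 * QA α u * QC α u - QB α u ^ 2
      = 2 * kernelForm (fun i j => rootKernel (α i) (α j)) u := by
  have hB : QB α u ^ 2 = ∑ i, ∑ j, (u i * (2 * (α i).re)) * (u j * (2 * (α j).re)) := by
    rw [QB, neg_sq, sq, sum_mul_sum]
  have hAC : 4 * QA α u * QC α u = 2 * (QA α u * QC α u) + 2 * (QC α u * QA α u) := by ring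
  rw [hAC, hB, QA, QC, sum_mul_sum, sum_mul_sum, mul_sum, mul_sum, ← sum_add_distrib,
    ← sum_sub_distrib, kernelForm, mul_sum]
  refine sum_congr rfl fun i _ => ?_
  rw [mul_sum, mul_sum, ← sum_add_distrib, ← sum_sub_distrib, mul_sum]
  refine sum_congr rfl fun j _ => ?_
  simp only [rootKernel, normSq_apply, sub_re, sub_im, conj_re, conj_im]; ring

lemma theta_eq_kernelForm (α : Fin 6 → ℂ) {u : Fin 6 → ℝ} (hu : ∀ i, 0 ≤ u i) :
    theta α u = (2 * kernelForm (fun i j => rootKernel (α i) (α j)) u) ^ 3 / ∏ i, u i := by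
  rw [theta, abs_sub_comm, four_QA_mul_QC_sub_QB_sq, abs_of_nonneg]
  exact mul_nonneg zero_le_two (kernelForm_nonneg (fun _ _ => rootKernel_nonneg _ _) hu)

section Symmetrization

variable {α : Fin 6 → ℂ} {σ : Equiv.Perm (Fin 6)} {w : Fin 6 → ℝ}

lemma Admissible.sqrt_mul_comp (hσ : ∀ i, α (σ i) = -α i) (hw : Admissible α w) :
    Admissible α fun i => √(w i * w (σ i)) := by
  refine ⟨fun i => Real.sqrt_pos.2 (mul_pos (hw.1 i) (hw.1 (σ i))), fun i j hij => ?_⟩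
  have hσij : α (σ j) = (starRingEnd ℂ) (α (σ i)) := by rw [hσ, hσ, hij, map_neg]
  simp only [hw.2 i j hij, hw.2 _ _ hσij]

lemma prod_sqrt_mul_comp (hw : ∀ i, 0 < w i) : ∏ i, √(w i * w (σ i)) = ∏ i, w i := by
  rw [← Real.sqrt_prod _ fun i _ => (mul_pos (hw i) (hw (σ i))).le, prod_mul_distrib,
    Equiv.prod_comp σ w, Real.sqrt_mul_self (prod_pos fun i _ => hw i).le]

theorem apply_perm_eq_of_forall_theta_le (hα : Function.Injective α) (hσ : ∀ i, α (σ i) = -α i)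
    (hw : Admissible α w) (hmin : ∀ v, Admissible α v → theta α w ≤ theta α v) :
    ∀ i, w (σ i) = w i := by
  by_contra hsym
  set K : Fin 6 → Fin 6 → ℝ := fun i j => rootKernel (α i) (α j)
  set v : Fin 6 → ℝ := fun i => √(w i * w (σ i))
  have hne : w ≠ w ∘ σ := fun h => hsym fun i => (congrFun h i).symm
  have hv : Admissible α v := hw.sqrt_mul_comp hσ
  have hlt : kernelForm K v < kernelForm K w := by
    have h : 2 * kernelForm K v < kernelForm K w + kernelForm K (w ∘ σ) :=
      two_mul_kernelForm_lt_add (by simp) (fun i j => rootKernel_nonneg _ _)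
      (fun i j hij => rootKernel_pos (hα.ne hij)) hw.1 (fun i => hw.1 (σ i))
      (fun i => Real.sq_sqrt (mul_pos (hw.1 i) (hw.1 (σ i))).le) hne
    rw [kernelForm_comp_perm σ (fun i j => by dsimp only [K]; rw [hσ, hσ, rootKernel_neg])] at h
    linarith
  have hle := hmin v hv
  rw [theta_eq_kernelForm α (fun i => (hw.1 i).le), theta_eq_kernelForm α (fun i => (hv.1 i).le),
    prod_sqrt_mul_comp hw.1, div_le_div_iff_of_pos_right (prod_pos fun i _ => hw.1 i)] at hle
  have hK : ∀ i j, 0 ≤ K i j := fun i j => rootKernel_nonneg _ _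
  have h0 := kernelForm_nonneg hK fun i => (hv.1 i).le
  have h0' := kernelForm_nonneg hK fun i => (hw.1 i).le
  have := (pow_le_pow_iff_left₀ (by positivity) (by positivity) three_ne_zero).1 hle
  linarith

lemma QB_eq_zero_of_apply_perm_eq (hσ : ∀ i, α (σ i) = -α i) (hw : ∀ i, w (σ i) = w i) :
    QB α w = 0 := by
  have h : ∑ i, w i * (2 * (α i).re) = -∑ i, w i * (2 * (α i).re) := by
    conv_lhs => rw [← Equiv.sum_comp σ]
    rw [← sum_neg_distrib]
    refine sum_congr rfl fun i _ => ?_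
    rw [hσ, hw, neg_re]; ring
  rw [QB, neg_eq_zero]
  linarith

end Symmetrization

lemma ofReal_mul_sqrt_div_mul_I_sq_add_eq_zero {A C : ℝ} (hA : A ≠ 0) (hCA : 0 ≤ C / A) :
    (A : ℂ) * ((√(C / A) : ℂ) * I) ^ 2 + C = 0 := by
  have hA' : (A : ℂ) ≠ 0 := ofReal_ne_zero.2 hA
  rw [mul_pow, I_sq, ← ofReal_pow, Real.sq_sqrt hCA, ofReal_div]
  field_simp
  ring

lemma mul_I_or_inv_mul_I_mem_fundamentalDomain {c : ℝ} (hc : 0 < c) :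
    (|((c : ℂ) * I).re| ≤ 1 / 2 ∧ 1 ≤ ‖(c : ℂ) * I‖) ∨
      (|((c : ℂ)⁻¹ * I).re| ≤ 1 / 2 ∧ 1 ≤ ‖(c : ℂ)⁻¹ * I‖) := by
  rw [← ofReal_inv]
  simp only [mul_I_re, ofReal_im, neg_zero, abs_zero, norm_mul, norm_I, mul_one, norm_real,
    Real.norm_eq_abs, abs_of_pos hc, abs_of_pos (inv_pos.2 hc)]
  rcases le_or_gt 1 c with h | h
  · exact Or.inl ⟨by norm_num, h⟩
  · exact Or.inr ⟨by norm_num, one_le_inv₀ hc |>.2 h.le⟩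

/-- Let `f(x) = x⁶ - s₁x⁴ + s₂x² - 1` have six distinct complex roots
`α₁, …, α₆`.  If `w` is an admissible global minimizer of `θ`, then the coefficient of `x`
in `Q_w` vanishes (so `Q_w = A x² + C` with `A, C > 0`), the unique root of `Q_w` in the
upper half-plane is the purely imaginary `c·i` with `c = √(C/A) > 0`, and either `c·i` or
`i/c` lies in the fundamental domain `{z : |Re z| ≤ 1/2, |z| ≥ 1}`.  Consequently, the
binary sextic `f(x,z)` or `f(-z,x)` is reduced. -/
theorem stmt15 (s₁ s₂ : ℝ) (α : Fin 6 → ℂ) (hα : Function.Injective α)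
    (hroots : (Polynomial.X ^ 6 - Polynomial.C (s₁ : ℂ) * Polynomial.X ^ 4
        + Polynomial.C (s₂ : ℂ) * Polynomial.X ^ 2 - 1 : Polynomial ℂ)
      = ∏ i : Fin 6, (Polynomial.X - Polynomial.C (α i)))
    (w : Fin 6 → ℝ) (hw : Admissible α w)
    (hmin : ∀ v : Fin 6 → ℝ, Admissible α v → theta α w ≤ theta α v) :
    QB α w = 0 ∧ 0 < QA α w ∧ 0 < QC α w ∧
    (0 : ℝ) < Real.sqrt (QC α w / QA α w) ∧
    (QA α w : ℂ) * ((Real.sqrt (QC α w / QA α w) : ℂ) * Complex.I) ^ 2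
        + (QB α w : ℂ) * ((Real.sqrt (QC α w / QA α w) : ℂ) * Complex.I)
        + (QC α w : ℂ) = 0 ∧
    ((|(((Real.sqrt (QC α w / QA α w) : ℂ)) * Complex.I).re| ≤ 1 / 2 ∧
        1 ≤ ‖(Real.sqrt (QC α w / QA α w) : ℂ) * Complex.I‖) ∨
      (|(((Real.sqrt (QC α w / QA α w) : ℂ))⁻¹ * Complex.I).re| ≤ 1 / 2 ∧
        1 ≤ ‖((Real.sqrt (QC α w / QA α w) : ℂ))⁻¹ * Complex.I‖)) := by
  have hf (x : ℂ) : ∏ j, (x - α j) = x ^ 6 - s₁ * x ^ 4 + s₂ * x ^ 2 - 1 := by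
    simpa [Polynomial.eval_prod] using (congrArg (Polynomial.eval x) hroots).symm
  have hα0 (i : Fin 6) : α i ≠ 0 := by
    have h0 : ∏ j, (0 - α j) ≠ 0 := by rw [hf]; norm_num
    exact fun hi => h0 (prod_eq_zero (mem_univ i) (by rw [hi, sub_zero]))
  obtain ⟨σ, hσ⟩ := exists_perm_apply_eq_neg hα
    (exists_eq_neg_of_prod_sub_even fun x => by rw [hf, hf]; ring)
  have hQB := QB_eq_zero_of_apply_perm_eq hσ (apply_perm_eq_of_forall_theta_le hα hσ hw hmin)
  have hA : 0 < QA α w := sum_pos (fun i _ => hw.1 i) univ_nonempty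
  have hC : 0 < QC α w :=
    sum_pos (fun i _ => mul_pos (hw.1 i) (normSq_pos.2 (hα0 i))) univ_nonempty
  have hc := Real.sqrt_pos.2 (div_pos hC hA)
  refine ⟨hQB, hA, hC, hc, ?_, mul_I_or_inv_mul_I_mem_fundamentalDomain hc⟩
  rw [hQB, ofReal_zero, zero_mul, add_zero]
  exact ofReal_mul_sqrt_div_mul_I_sq_add_eq_zero hA.ne' (div_pos hC hA).le
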